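/- Under the mixing formula above, whenever θ√n ≠ 0 (and more generally unless the conditioning event has probability 1), the conditional distribution of Z_{(2)} given {Z₁ ≤ c₁} is not a normal distribution. -/

import Mathlib

open MeasureTheory ProbabilityTheory Real Set

/-!
If the pooled statistic were `N(m, v)` under `P[|Z₁ ≤ c₁]`, independence would factor its moment
generating function and force the conditional mgf of `Z₁` to be `exp (a s + b s²)` with
`a = √2 m - μ₀` and `b = v - 1/2`. As `Z₁ ≤ c₁` on the event, this is at most `exp (c₁ s)` for
`s ≥ 0`, so `b ≤ 0`. For `s ≤ 0`, on the other hand, the unconditional mgf `exp (μ₀ s + s²/2)` is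
at most the conditional one plus `exp (c₁ s)`, the contribution of `{Z₁ > c₁}`; with `b ≤ 0` this
bounds a Gaussian by two exponentials of linear functions, which fails as `s → -∞`.
-/

lemma nonpos_of_forall_quadratic_nonpos {α β γ : ℝ}
    (h : ∀ t, 0 ≤ t → α + β * t + γ * t ^ 2 ≤ 0) : γ ≤ 0 := by
  by_contra! hγ
  set t := (|α| + |β|) / γ + 1
  have ht : |α| + |β| < γ * t := by
    rw [mul_add, mul_div_cancel₀ _ hγ.ne']; linarith
  have ht1 : 1 ≤ t := by
    have : 0 ≤ (|α| + |β|) / γ := by positivity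
    linarith
  have := h t (by linarith)
  nlinarith [neg_abs_le α, neg_abs_le β, abs_nonneg α, abs_nonneg β]

lemma not_forall_exp_quadratic_le_exp_add_exp {β γ β₁ β₂ : ℝ} (hγ : 0 < γ) :
    ¬ ∀ t, 0 ≤ t → exp (β * t + γ * t ^ 2) ≤ exp (β₁ * t) + exp (β₂ * t) := by
  intro h
  refine hγ.not_ge (nonpos_of_forall_quadratic_nonpos (α := -log 2) (β := β - max β₁ β₂) ?_)
  intro t ht
  have hmax : exp (β₁ * t) + exp (β₂ * t) ≤ exp (log 2 + max β₁ β₂ * t) := by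
    rw [exp_add, exp_log two_pos, two_mul]
    gcongr <;> [exact le_max_left _ _; exact le_max_right _ _]
  have := exp_le_exp.1 ((h t ht).trans hmax)
  linarith

namespace ProbabilityTheory

variable {Ω : Type*} [MeasurableSpace Ω] {μ : Measure Ω} {X Y : Ω → ℝ} {t : ℝ}

lemma mgf_le_of_ae_le [IsFiniteMeasure μ] {C : ℝ} (h : ∀ᵐ ω ∂μ, t * X ω ≤ C) :
    mgf X μ t ≤ μ.real univ * exp C := by
  by_cases hint : Integrable (fun ω ↦ exp (t * X ω)) μ
  · calc mgf X μ t ≤ ∫ _, exp C ∂μ :=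
          integral_mono_ae hint (integrable_const _) (by filter_upwards [h] with ω hω using by gcongr)
      _ = μ.real univ * exp C := by rw [integral_const, smul_eq_mul]
  · rw [mgf_undef hint]; positivity

lemma mgf_cond_Iic_le_exp [IsFiniteMeasure μ] (hX : Measurable X) (ht : 0 ≤ t) {c : ℝ}
    (hc : μ (X ⁻¹' Iic c) ≠ 0) :
    mgf X (μ[|X ⁻¹' Iic c]) t ≤ exp (t * c) := by
  have := cond_isProbabilityMeasure hc
  calc mgf X (μ[|X ⁻¹' Iic c]) t ≤ (μ[|X ⁻¹' Iic c]).real univ * exp (t * c) :=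
        mgf_le_of_ae_le <| by
          filter_upwards [ae_cond_mem (hX measurableSet_Iic)] with ω hω
          exact mul_le_mul_of_nonneg_left hω ht
    _ = exp (t * c) := by rw [probReal_univ, one_mul]

lemma IndepFun.mgf_add_cond_preimage (hXY : X ⟂ᵢ[μ] Y) (hX : Measurable X) (hY : Measurable Y)
    {B : Set ℝ} (hB : MeasurableSet B) :
    mgf (X + Y) (μ[|X ⁻¹' B]) t = mgf X (μ[|X ⁻¹' B]) t * mgf Y μ t := by
  suffices mgf (X + Y) (μ.restrict (X ⁻¹' B)) t = mgf X (μ.restrict (X ⁻¹' B)) t * mgf Y μ t by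
    rw [ProbabilityTheory.cond, mgf_smul_measure, mgf_smul_measure, this, mul_assoc]
  have hexp : Measurable fun x : ℝ ↦ exp (t * x) := (measurable_const_mul t).exp
  have hind := hXY.integral_comp_mul_comp hX.aemeasurable hY.aemeasurable
    (hexp.indicator hB).aestronglyMeasurable hexp.aestronglyMeasurable
  simp only [mgf, Pi.add_apply, mul_add, exp_add]
  rw [← integral_indicator (hX hB), ← integral_indicator (hX hB)]
  have hprod : (X ⁻¹' B).indicator (fun ω ↦ exp (t * X ω) * exp (t * Y ω))
      = (B.indicator fun x ↦ exp (t * x)) ∘ X * (fun y ↦ exp (t * y)) ∘ Y := by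
    ext ω
    by_cases h : X ω ∈ B <;> simp [h]
  rw [hprod, hind]
  rfl

lemma mgf_le_mgf_cond_Iic_add_exp [IsProbabilityMeasure μ] (hX : Measurable X)
    (hint : Integrable (fun ω ↦ exp (t * X ω)) μ) (ht : t ≤ 0) {c : ℝ}
    (hc : μ (X ⁻¹' Iic c) ≠ 0) :
    mgf X μ t ≤ mgf X (μ[|X ⁻¹' Iic c]) t + exp (t * c) := by
  set A := X ⁻¹' Iic c
  have hA : MeasurableSet A := hX measurableSet_Iic
  have hsplit : mgf X μ t = mgf X (μ.restrict A) t + mgf X (μ.restrict Aᶜ) t := by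
    conv_lhs => rw [← Measure.restrict_add_restrict_compl (μ := μ) hA]
    exact mgf_add_measure hint.restrict hint.restrict
  have hin : mgf X (μ.restrict A) t ≤ mgf X (μ[|A]) t := by
    rw [ProbabilityTheory.cond, mgf_smul_measure, ENNReal.toReal_inv]
    exact le_mul_of_one_le_left mgf_nonneg
      (one_le_inv₀ (ENNReal.toReal_pos hc (measure_ne_top μ A)) |>.2 measureReal_le_one)
  have hout : mgf X (μ.restrict Aᶜ) t ≤ exp (t * c) := by
    refine (mgf_le_of_ae_le (C := t * c) ?_).trans ?_
    · refine ae_restrict_of_forall_mem hA.compl fun ω hω ↦ ?_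
      exact mul_le_mul_of_nonpos_left (le_of_lt (not_le.1 hω)) ht
    · rw [measureReal_restrict_apply_univ]
      exact mul_le_of_le_one_left (exp_pos _).le measureReal_le_one
  linarith

lemma mgf_cond_of_map_pooled_eq_gaussianReal (hXY : X ⟂ᵢ[μ] Y) (hX : Measurable X)
    (hY : Measurable Y) {μ₀ : ℝ} (hYlaw : μ.map Y = gaussianReal μ₀ 1) {B : Set ℝ}
    (hB : MeasurableSet B) {m : ℝ} {v : NNReal}
    (hlaw : (μ[|X ⁻¹' B]).map (fun ω ↦ (X ω + Y ω) / √2) = gaussianReal m v) (s : ℝ) :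
    mgf X (μ[|X ⁻¹' B]) s = exp ((√2 * m - μ₀) * s + (v - 1 / 2) * s ^ 2) := by
  have hpooled := mgf_gaussianReal hlaw (√2 * s)
  have hscale : (fun ω ↦ (X ω + Y ω) / √2) = fun ω ↦ (√2)⁻¹ * (X + Y) ω := by
    ext ω; rw [div_eq_inv_mul, Pi.add_apply]
  rw [hscale, mgf_const_mul, inv_mul_cancel_left₀ (by positivity),
    hXY.mgf_add_cond_preimage hX hY hB, mgf_gaussianReal hYlaw, eq_comm,
    ← div_eq_iff (exp_pos _).ne', ← exp_sub] at hpooled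
  rw [← hpooled]
  congr 1
  have : (√2) ^ 2 = 2 := sq_sqrt zero_le_two
  push_cast
  linear_combination (↑v / 2 * s ^ 2) * this

end ProbabilityTheory

theorem conditional_pooled_statistic_not_gaussian_general
    {Ω : Type*} [MeasurableSpace Ω] (P : Measure Ω) [IsProbabilityMeasure P]
    (Z₁ Z₂ : Ω → ℝ) (hm₁ : Measurable Z₁) (hm₂ : Measurable Z₂)
    (μ₀ : ℝ)
    (hind : IndepFun Z₁ Z₂ P)
    (hZ₁ : Measure.map Z₁ P = gaussianReal μ₀ 1)
    (hZ₂ : Measure.map Z₂ P = gaussianReal μ₀ 1)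
    (c₁ : ℝ) (hc_pos : 0 < P {ω | Z₁ ω ≤ c₁}) :
    ∀ (m : ℝ) (v : NNReal),
      Measure.map (fun ω => (Z₁ ω + Z₂ ω) / Real.sqrt 2)
          (P[|{ω | Z₁ ω ≤ c₁}]) ≠ gaussianReal m v := by
  intro m v hlaw
  have hA : P (Z₁ ⁻¹' Iic c₁) ≠ 0 := hc_pos.ne'
  set a := √2 * m - μ₀
  set b := (v : ℝ) - 1 / 2
  have hcond : ∀ s, mgf Z₁ (P[|Z₁ ⁻¹' Iic c₁]) s = exp (a * s + b * s ^ 2) :=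
    mgf_cond_of_map_pooled_eq_gaussianReal hind hm₁ hm₂ hZ₂ measurableSet_Iic hlaw
  have hb : b ≤ 0 := nonpos_of_forall_quadratic_nonpos (α := 0) (β := a - c₁) fun s hs ↦ by
    have hupper := mgf_cond_Iic_le_exp hm₁ hs hA
    rw [hcond, exp_le_exp] at hupper
    linarith
  refine not_forall_exp_quadratic_le_exp_add_exp (β := -μ₀) (β₁ := -a) (β₂ := -c₁)
    one_half_pos fun t ht ↦ ?_
  have hint : Integrable (fun ω ↦ exp (-t * Z₁ ω)) P :=
    mgf_pos_iff.1 (by rw [mgf_gaussianReal hZ₁]; exact exp_pos _)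
  have hlower := mgf_le_mgf_cond_Iic_add_exp hm₁ hint (neg_nonpos.2 ht) hA
  rw [mgf_gaussianReal hZ₁, hcond] at hlower
  calc exp (-μ₀ * t + 1 / 2 * t ^ 2) = exp (μ₀ * -t + (1 : NNReal) * (-t) ^ 2 / 2) := by
        congr 1; push_cast; ring
    _ ≤ exp (a * -t + b * (-t) ^ 2) + exp (-t * c₁) := hlower
    _ ≤ exp (-a * t) + exp (-c₁ * t) := by
        refine add_le_add (exp_le_exp.2 ?_) (le_of_eq (by ring_nf))
        nlinarith [sq_nonneg t]

/-- Let `Z₁, Z₂` be independent `N(μ₀,1)` random variables and `c₁ ∈ ℝ` with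
`0 < Pr(Z₁ ≤ c₁) < 1`. Then the law of the pooled statistic
`Z_{(2)} = (Z₁+Z₂)/√2` conditional on the continuation event `{Z₁ ≤ c₁}` is not
a normal distribution: it differs from every Gaussian law on `ℝ`. -/
theorem conditional_pooled_statistic_not_gaussian
    {Ω : Type*} [MeasurableSpace Ω] (P : Measure Ω) [IsProbabilityMeasure P]
    (Z₁ Z₂ : Ω → ℝ) (hm₁ : Measurable Z₁) (hm₂ : Measurable Z₂)
    (μ₀ : ℝ)
    (hind : IndepFun Z₁ Z₂ P)
    (hZ₁ : Measure.map Z₁ P = gaussianReal μ₀ 1)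
    (hZ₂ : Measure.map Z₂ P = gaussianReal μ₀ 1)
    (c₁ : ℝ) (hc_pos : 0 < P {ω | Z₁ ω ≤ c₁}) (hc_lt : P {ω | Z₁ ω ≤ c₁} < 1) :
    ∀ (m : ℝ) (v : NNReal),
      Measure.map (fun ω => (Z₁ ω + Z₂ ω) / Real.sqrt 2)
          (P[|{ω | Z₁ ω ≤ c₁}]) ≠ gaussianReal m v :=
  conditional_pooled_statistic_not_gaussian_general P Z₁ Z₂ hm₁ hm₂ μ₀ hind hZ₁ hZ₂ c₁ hc_pos
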